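/- arXiv:1509.03366 — 6 statements merged into one kernel-verified Lean document; each statement's English description precedes it below -/
import Mathlib

section
/- For every r > 0 with r ≠ exp(-π/√3), there exists a unique x ∈ (-5/6, 1/6) with x ≠ -2/3 such that (2+3x)·log r + log(2·cos(π(x+1/3))) = 0. Moreover x ∈ (-5/6, -2/3) if r < exp(-π/√3), and x ∈ (-2/3, 1/6) if r > exp(-π/√3). For r = exp(-π/√3), the only solution in (-5/6,1/6) is x = -2/3. -/
/-!
For `c = log r`, `y_r` is strictly concave on `(-5/6, 1/6)` (its derivative `3c - π tan(π(x+1/3))`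
is strictly decreasing) and tends to `-∞` at both endpoints. A strictly concave function with these
limits and a zero `p` where `f'(p) = d ≠ 0` has exactly one other zero `q`, and the tangent line at
`p` forces `d (q - p) > 0`; if `d = 0` then `p` is the strict maximum. At `p = -2/3` we get
`d = 3 (log r + π/√3)`, whose sign is that of `r - exp(-π/√3)`.
-/

open Real Set Filter Topology

namespace StrictConcaveOn

variable {S : Set ℝ} {f : ℝ → ℝ}

lemma lt_add_mul_sub_of_hasDerivAt {p q d : ℝ} (hf : StrictConcaveOn ℝ S f) (hp : p ∈ S)
    (hq : q ∈ S) (hqp : q ≠ p) (hd : HasDerivAt f d p) : f q < f p + d * (q - p) := by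
  rcases hqp.lt_or_gt with h | h
  · have := hf.lt_slope_of_hasDerivAt hq hp h hd
    rw [slope_def_field, lt_div_iff₀ (sub_pos.2 h)] at this
    linarith
  · have := hf.slope_lt_of_hasDerivAt hp hq h hd
    rw [slope_def_field, div_lt_iff₀ (sub_pos.2 h)] at this
    linarith

lemma pos_mul_sub_of_eq_zero {p q d : ℝ} (hf : StrictConcaveOn ℝ S f) (hp : p ∈ S) (hq : q ∈ S)
    (hqp : q ≠ p) (hfp : f p = 0) (hfq : f q = 0) (hd : HasDerivAt f d p) : 0 < d * (q - p) := by
  simpa [hfp, hfq] using hf.lt_add_mul_sub_of_hasDerivAt hp hq hqp hd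

lemma pos_of_mem_Ioo_of_eq_zero {x y z : ℝ} (hf : StrictConcaveOn ℝ S f) (hx : x ∈ S) (hz : z ∈ S)
    (hy : y ∈ Ioo x z) (hfx : f x = 0) (hfz : f z = 0) : 0 < f y := by
  have hxz := hy.1.trans hy.2
  simpa [hfx, hfz] using hf.lt_on_openSegment hx hz hxz.ne ((openSegment_eq_Ioo hxz).symm ▸ hy)

end StrictConcaveOn

section Ioo

variable {f : ℝ → ℝ} {a b y : ℝ}

lemma exists_zero_mem_Ioo_right_of_tendsto_atBot (hf : ContinuousOn f (Ioo a b))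
    (hb : Tendsto f (𝓝[<] b) atBot) (hy : y ∈ Ioo a b) (hfy : 0 < f y) :
    ∃ q ∈ Ioo y b, f q = 0 := by
  have hl : 𝓝[Ioo y b] b = 𝓝[<] b := nhdsWithin_Ioo_eq_nhdsLT hy.2
  have : (𝓝[Ioo y b] b).NeBot := hl ▸ inferInstance
  obtain ⟨q, hq, hq0⟩ := isPreconnected_Ico.intermediate_value_Iic (left_mem_Ico.2 hy.2)
    (le_principal_iff.2 (mem_of_superset self_mem_nhdsWithin Ioo_subset_Ico_self))
    (hf.mono fun x hx => ⟨hy.1.trans_le hx.1, hx.2⟩) (hl ▸ hb) hfy.le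
  exact ⟨q, ⟨hq.1.lt_of_ne (by rintro rfl; exact hfy.ne' hq0), hq.2⟩, hq0⟩

lemma exists_zero_mem_Ioo_left_of_tendsto_atBot (hf : ContinuousOn f (Ioo a b))
    (ha : Tendsto f (𝓝[>] a) atBot) (hy : y ∈ Ioo a b) (hfy : 0 < f y) :
    ∃ q ∈ Ioo a y, f q = 0 := by
  have hl : 𝓝[Ioo a y] a = 𝓝[>] a := nhdsWithin_Ioo_eq_nhdsGT hy.1
  have : (𝓝[Ioo a y] a).NeBot := hl ▸ inferInstance
  obtain ⟨q, hq, hq0⟩ := isPreconnected_Ioc.intermediate_value_Iic (right_mem_Ioc.2 hy.1)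
    (le_principal_iff.2 (mem_of_superset self_mem_nhdsWithin Ioo_subset_Ioc_self))
    (hf.mono fun x hx => ⟨hx.1, hx.2.trans_lt hy.2⟩) (hl ▸ ha) hfy.le
  exact ⟨q, ⟨hq.1, hq.2.lt_of_ne (by rintro rfl; exact hfy.ne' hq0)⟩, hq0⟩

theorem StrictConcaveOn.existsUnique_zero_ne {p d : ℝ} (hf : StrictConcaveOn ℝ (Ioo a b) f)
    (ha : Tendsto f (𝓝[>] a) atBot) (hb : Tendsto f (𝓝[<] b) atBot) (hp : p ∈ Ioo a b)
    (hfp : f p = 0) (hd : HasDerivAt f d p) (hd0 : d ≠ 0) :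
    ∃! q, q ∈ Ioo a b ∧ q ≠ p ∧ f q = 0 := by
  have hcont : ContinuousOn f (Ioo a b) := by
    simpa only [interior_Ioo] using hf.concaveOn.continuousOn_interior
  obtain ⟨y, hpy, hy⟩ : ∃ y, f p < f y ∧ y ∈ Ioo a b := by
    have : ¬IsLocalMax f p := fun h => hd0 (h.hasDerivAt_eq_zero hd)
    simp only [IsLocalMax, IsMaxFilter, not_eventually, not_le] at this
    exact (this.and_eventually (Ioo_mem_nhds hp.1 hp.2)).exists
  rw [hfp] at hpy
  obtain ⟨q₁, hq₁, hq₁0⟩ := exists_zero_mem_Ioo_left_of_tendsto_atBot hcont ha hy hpy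
  obtain ⟨q₂, hq₂, hq₂0⟩ := exists_zero_mem_Ioo_right_of_tendsto_atBot hcont hb hy hpy
  have hq₁I : q₁ ∈ Ioo a b := ⟨hq₁.1, hq₁.2.trans hy.2⟩
  have hq₂I : q₂ ∈ Ioo a b := ⟨hy.1.trans hq₂.1, hq₂.2⟩
  refine existsUnique_of_exists_of_unique ?_ ?_
  · by_cases h : q₁ = p
    · exact ⟨q₂, hq₂I, (h ▸ hq₁.2.trans hq₂.1).ne', hq₂0⟩
    · exact ⟨q₁, hq₁I, h, hq₁0⟩
  · rintro q q' ⟨hq, hqp, hq0⟩ ⟨hq', hq'p, hq'0⟩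
    have hs := hf.pos_mul_sub_of_eq_zero hp hq hqp hfp hq0 hd
    have hs' := hf.pos_mul_sub_of_eq_zero hp hq' hq'p hfp hq'0 hd
    -- Zeros other than `p` lie on the side of `p` where `d * (q - p) > 0`, and a strictly concave
    -- function has no three zeros.
    by_contra hne
    wlog hlt : q < q' generalizing q q'
    · exact this q' q hq' hq'p hq'0 hq hqp hq0 hs' hs (Ne.symm hne)
        ((Ne.symm hne).lt_of_le (not_lt.1 hlt))
    rcases hqp.symm.lt_or_gt with hpq | hqp
    · exact (hf.pos_of_mem_Ioo_of_eq_zero hp hq' ⟨hpq, hlt⟩ hfp hq'0).ne' hq0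
    · have hq'p : q' < p := by
        by_contra h
        nlinarith [lt_of_le_of_ne (not_lt.1 h) hq'p.symm]
      exact (hf.pos_of_mem_Ioo_of_eq_zero hq hp ⟨hlt, hq'p⟩ hq0 hfp).ne' hq'0

end Ioo

noncomputable def yr (r x : ℝ) : ℝ := (2 + 3 * x) * log r + log (2 * cos (π * (x + 1/3)))

lemma pi_mul_add_third_mem_Ioo {x : ℝ} (hx : x ∈ Ioo (-(5:ℝ)/6) (1/6)) :
    π * (x + 1/3) ∈ Ioo (-(π/2)) (π/2) := by
  obtain ⟨h₁, h₂⟩ := hx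
  constructor <;> nlinarith [pi_pos]

lemma cos_pi_mul_add_third_pos {x : ℝ} (hx : x ∈ Ioo (-(5:ℝ)/6) (1/6)) :
    0 < cos (π * (x + 1/3)) :=
  cos_pos_of_mem_Ioo (pi_mul_add_third_mem_Ioo hx)

lemma hasDerivAt_yr (r : ℝ) {x : ℝ} (hx : x ∈ Ioo (-(5:ℝ)/6) (1/6)) :
    HasDerivAt (yr r) (3 * log r - π * tan (π * (x + 1/3))) x := by
  have hcos := cos_pi_mul_add_third_pos hx
  have hlin : HasDerivAt (fun y : ℝ => π * (y + 1/3)) π x := by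
    simpa using ((hasDerivAt_id x).add_const (1/3 : ℝ)).const_mul π
  have hlog := (((hasDerivAt_cos _).comp x hlin).const_mul 2).log (by positivity)
  have hpoly : HasDerivAt (fun y : ℝ => (2 + 3 * y) * log r) (3 * log r) x := by
    simpa using (((hasDerivAt_id x).const_mul 3).const_add 2).mul_const (log r)
  have hsum : HasDerivAt (yr r) (3 * log r +
      2 * (-sin (π * (x + 1/3)) * π) / (2 * cos (π * (x + 1/3)))) x := hpoly.add hlog
  convert hsum using 1
  rw [tan_eq_sin_div_cos]
  field_simp
  ring

lemma strictConcaveOn_yr (r : ℝ) : StrictConcaveOn ℝ (Ioo (-(5:ℝ)/6) (1/6)) (yr r) := by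
  refine StrictAntiOn.strictConcaveOn_of_deriv (convex_Ioo _ _)
    (fun x hx => (hasDerivAt_yr r hx).continuousAt.continuousWithinAt) ?_
  rw [interior_Ioo]
  intro x hx x' hx' hlt
  rw [(hasDerivAt_yr r hx).deriv, (hasDerivAt_yr r hx').deriv]
  have := strictMonoOn_tan (pi_mul_add_third_mem_Ioo hx) (pi_mul_add_third_mem_Ioo hx')
    (by nlinarith [pi_pos])
  nlinarith [pi_pos]

lemma tendsto_yr_atBot (r : ℝ) {l : Filter ℝ} {e : ℝ} (hl : l ≤ 𝓝 e)
    (he : cos (π * (e + 1/3)) = 0) (hI : ∀ᶠ x in l, x ∈ Ioo (-(5:ℝ)/6) (1/6)) :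
    Tendsto (yr r) l atBot := by
  have hpoly : Tendsto (fun x : ℝ => (2 + 3 * x) * log r) l (𝓝 ((2 + 3 * e) * log r)) :=
    (Continuous.tendsto (f := fun x : ℝ => (2 + 3 * x) * log r) (by fun_prop) e).mono_left hl
  have hcos : Tendsto (fun x : ℝ => 2 * cos (π * (x + 1/3))) l (𝓝[>] 0) := by
    refine tendsto_nhdsWithin_iff.2 ⟨?_, hI.mono fun x hx => ?_⟩
    · have := (Continuous.tendsto
        (f := fun x : ℝ => 2 * cos (π * (x + 1/3))) (by fun_prop) e).mono_left hl
      rwa [he, mul_zero] at this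
    · exact mul_pos two_pos (cos_pi_mul_add_third_pos hx)
  exact hpoly.add_atBot (tendsto_log_nhdsGT_zero.comp hcos)

lemma tendsto_yr_nhdsGT (r : ℝ) : Tendsto (yr r) (𝓝[>] (-(5:ℝ)/6)) atBot := by
  refine tendsto_yr_atBot r nhdsWithin_le_nhds ?_ (Ioo_mem_nhdsGT (by norm_num))
  rw [show π * (-(5:ℝ)/6 + 1/3) = -(π/2) by ring, cos_neg, cos_pi_div_two]

lemma tendsto_yr_nhdsLT (r : ℝ) : Tendsto (yr r) (𝓝[<] (1/6 : ℝ)) atBot := by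
  refine tendsto_yr_atBot r nhdsWithin_le_nhds ?_ (Ioo_mem_nhdsLT (by norm_num))
  rw [show π * ((1:ℝ)/6 + 1/3) = π/2 by ring, cos_pi_div_two]

lemma yr_neg_two_thirds (r : ℝ) : yr r (-(2:ℝ)/3) = 0 := by
  rw [yr, show π * (-(2:ℝ)/3 + 1/3) = -(π/3) by ring, cos_neg, cos_pi_div_three]
  norm_num

lemma hasDerivAt_yr_neg_two_thirds (r : ℝ) :
    HasDerivAt (yr r) (3 * (log r + π / √3)) (-(2:ℝ)/3) := by
  convert hasDerivAt_yr r (x := -(2:ℝ)/3) (by norm_num) using 1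
  have hs : √3 ^ 2 = 3 := sq_sqrt (by norm_num)
  rw [show π * (-(2:ℝ)/3 + 1/3) = -(π/3) by ring, tan_neg, tan_pi_div_three]
  field_simp
  linear_combination (-π) * hs

theorem stmt0 (r : ℝ) (hr : 0 < r) :
    (r ≠ Real.exp (-(Real.pi / Real.sqrt 3)) →
      ∃! x : ℝ, x ∈ Set.Ioo (-(5:ℝ)/6) (1/6) ∧ x ≠ -(2:ℝ)/3 ∧
        (2 + 3*x) * Real.log r + Real.log (2 * Real.cos (Real.pi * (x + 1/3))) = 0) ∧
    (∀ x ∈ Set.Ioo (-(5:ℝ)/6) (1/6), x ≠ -(2:ℝ)/3 →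
      (2 + 3*x) * Real.log r + Real.log (2 * Real.cos (Real.pi * (x + 1/3))) = 0 →
      (r < Real.exp (-(Real.pi / Real.sqrt 3)) → x ∈ Set.Ioo (-(5:ℝ)/6) (-(2:ℝ)/3)) ∧
      (Real.exp (-(Real.pi / Real.sqrt 3)) < r → x ∈ Set.Ioo (-(2:ℝ)/3) (1/6))) ∧
    (r = Real.exp (-(Real.pi / Real.sqrt 3)) →
      ∀ x ∈ Set.Ioo (-(5:ℝ)/6) (1/6),
        (2 + 3*x) * Real.log r + Real.log (2 * Real.cos (Real.pi * (x + 1/3))) = 0 →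
        x = -(2:ℝ)/3) := by
  have hf := strictConcaveOn_yr r
  have hp : (-(2:ℝ)/3) ∈ Ioo (-(5:ℝ)/6) (1/6) := by norm_num
  have hd := hasDerivAt_yr_neg_two_thirds r
  have hside : ∀ x ∈ Ioo (-(5:ℝ)/6) (1/6), x ≠ -(2:ℝ)/3 → yr r x = 0 →
      0 < 3 * (log r + π / √3) * (x - -(2:ℝ)/3) := fun x hx hne hx0 =>
    hf.pos_mul_sub_of_eq_zero hp hx hne (yr_neg_two_thirds r) hx0 hd
  refine ⟨fun hne => ?_, fun x hx hne hx0 => ⟨fun hlt => ?_, fun hgt => ?_⟩, fun heq x hx hx0 => ?_⟩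
  · refine hf.existsUnique_zero_ne (tendsto_yr_nhdsGT r) (tendsto_yr_nhdsLT r) hp
      (yr_neg_two_thirds r) hd fun h => hne ?_
    rw [← exp_log hr]
    congr 1
    linarith
  · have := (log_lt_iff_lt_exp hr).2 hlt
    exact ⟨hx.1, by nlinarith [hside x hx hne hx0]⟩
  · have := (lt_log_iff_exp_lt hr).2 hgt
    exact ⟨by nlinarith [hside x hx hne hx0], hx.2⟩
  · by_contra hne
    have := hside x hx hne hx0
    rw [heq, log_exp, neg_add_cancel, mul_zero, zero_mul] at this
    exact this.false
end

section
/- For every ζ ∈ (0, 1/6), one has (4π/3)·sin(πζ) + 2·cos(π(ζ+1/3))·( log(2·cos(π(ζ+1/3)))/(3ζ) + √3·π/3 ) > 0. -/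
/-!
Put `t = πζ ∈ (0, π/6)` and `y = t + π/3 ∈ (π/3, π/2)`, so that `x = 2 cos y ∈ (0, 1)`.
Since `x log x > x - 1` and, by concavity of `cos` (tangent line at `y`),
`1 - 2 cos y ≤ 2 t sin y`, the quantity times `3ζ` exceeds
`t (4 sin t + 2√3 cos y - 2 sin y)`, which vanishes by the addition formula for `sin y`.
-/

open Real

lemma sub_one_lt_mul_log {x : ℝ} (hx : 0 < x) (hx1 : x ≠ 1) : x - 1 < x * log x := by
  have h := log_lt_sub_one_of_pos (inv_pos.2 hx) (inv_ne_one.2 hx1)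
  rw [log_inv] at h
  have h' := mul_lt_mul_of_pos_left h hx
  rw [mul_sub, mul_inv_cancel₀ hx.ne', mul_one, mul_neg] at h'
  linarith

lemma cos_sub_cos_le_mul_sin {a y : ℝ} (ha : -(π / 2) ≤ a) (hay : a < y) (hy : y ≤ π / 2) :
    cos a - cos y ≤ (y - a) * sin y := by
  have h := strictConcaveOn_cos_Icc.concaveOn.le_slope_of_hasDerivAt
    ⟨ha, hay.le.trans hy⟩ ⟨ha.trans hay.le, hy⟩ hay (hasDerivAt_cos y)
  rw [slope_def_field, le_div_iff₀ (sub_pos.2 hay)] at h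
  linarith

lemma two_mul_sin_add_sqrt_three_mul_cos_add_pi_div_three (t : ℝ) :
    2 * sin t + √3 * cos (t + π / 3) = sin (t + π / 3) := by
  have h3 : √3 * √3 = 3 := mul_self_sqrt (by norm_num)
  rw [sin_add, cos_add, sin_pi_div_three, cos_pi_div_three]
  linear_combination (-sin t / 2) * h3

theorem stmt4 : ∀ ζ ∈ Set.Ioo (0:ℝ) (1/6),
    0 < (4*Real.pi/3) * Real.sin (Real.pi*ζ) +
      2 * Real.cos (Real.pi*(ζ+1/3)) *
        (Real.log (2*Real.cos (Real.pi*(ζ+1/3))) / (3*ζ) + Real.sqrt 3 * Real.pi / 3) := by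
  rintro ζ ⟨hζ0, hζ6⟩
  have hπ := pi_pos
  have hy : π * (ζ + 1/3) = π * ζ + π / 3 := by ring
  set y := π * (ζ + 1/3)
  have hy_lo : π / 3 < y := by nlinarith
  have hy_hi : y < π / 2 := by nlinarith
  have hx0 : 0 < 2 * cos y := by linarith [cos_pos_of_mem_Ioo ⟨by linarith, hy_hi⟩]
  have hx1 : 2 * cos y < 1 := by
    have h := cos_lt_cos_of_nonneg_of_le_pi_div_two (by positivity) hy_hi.le hy_lo
    rw [cos_pi_div_three] at h
    linarith
  have hlog := sub_one_lt_mul_log hx0 hx1.ne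
  have htangent : 1 - 2 * cos y ≤ 2 * (π * ζ) * sin y := by
    have h := cos_sub_cos_le_mul_sin (by linarith) hy_lo hy_hi.le
    rw [cos_pi_div_three, show y - π / 3 = π * ζ by linarith] at h
    linarith
  have hsum : 4 * sin (π * ζ) + 2 * √3 * cos y = 2 * sin y := by
    rw [hy, ← two_mul_sin_add_sqrt_three_mul_cos_add_pi_div_three]
    ring
  have hE : (4 * π / 3) * sin (π * ζ) + 2 * cos y * (log (2 * cos y) / (3 * ζ) + √3 * π / 3)
      = (2 * cos y * log (2 * cos y) + π * ζ * (2 * sin y)) / (3 * ζ) := by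
    rw [← hsum]
    field_simp
    ring
  rw [hE]
  exact div_pos (by linarith) (by positivity)
end

section
/- Define Λ(ζ) = 3·∫_{-∞}^{ζ} exp(s³ − ζ³) ds for ζ ∈ ℝ. Then the integral converges for every ζ, Λ(ζ) > 0 for all ζ, and Λ is differentiable with Λ'(ζ) + 3ζ²·Λ(ζ) = 3 for all ζ ∈ ℝ. -/
/-!
Since `e^{s³ - ζ³} = e^{s³} e^{-ζ³}`, `Λ ζ = 3 e^{-ζ³} F ζ` with `F ζ = ∫_{-∞}^ζ e^{s³} ds`.
The integral converges because `e^{s³} ≤ e^s` for `s ≤ -1`, and `F' = e^{ζ³}` by the fundamental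
theorem of calculus, so the product rule gives `Λ' = -3ζ²Λ + 3 e^{-ζ³} e^{ζ³} = 3 - 3ζ²Λ`.
-/

open MeasureTheory Set Real

lemma integrableOn_exp_pow_three_Iic (a : ℝ) : IntegrableOn (fun s => exp (s ^ 3)) (Iic a) := by
  have hcont : Continuous fun s : ℝ => exp (s ^ 3) := by fun_prop
  have htail : IntegrableOn (fun s => exp (s ^ 3)) (Iic (-1)) := by
    refine (integrableOn_exp_Iic (-1)).mono' hcont.aestronglyMeasurable ?_
    filter_upwards [ae_restrict_mem measurableSet_Iic] with s (hs : s ≤ -1)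
    rw [norm_of_nonneg (exp_pos _).le, exp_le_exp]
    nlinarith [sq_nonneg s, sq_nonneg (s + 1)]
  exact (htail.union hcont.integrableOn_Icc).mono_set Iic_subset_Iic_union_Icc

lemma hasDerivAt_setIntegral_Iic {E : Type*} [NormedAddCommGroup E] [NormedSpace ℝ E]
    [CompleteSpace E] {f : ℝ → E} (hf : Continuous f) (hint : ∀ a, IntegrableOn f (Iic a))
    (x : ℝ) : HasDerivAt (fun y => ∫ s in Iic y, f s) (f x) x := by
  have hsplit : (fun y => (∫ s in Iic x, f s) + ∫ s in x..y, f s) = fun y => ∫ s in Iic y, f s := by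
    funext y
    rw [← intervalIntegral.integral_Iic_sub_Iic (hint x) (hint y), add_sub_cancel]
  rw [← hsplit]
  exact (intervalIntegral.integral_hasDerivAt_right (hf.intervalIntegrable x x)
    (hf.stronglyMeasurableAtFilter _ _) hf.continuousAt).const_add _

lemma setIntegral_Iic_pos {f : ℝ → ℝ} {a : ℝ} (hpos : ∀ s, 0 < f s)
    (hint : IntegrableOn f (Iic a)) : 0 < ∫ s in Iic a, f s := by
  rw [setIntegral_pos_iff_support_of_nonneg_ae (ae_of_all _ fun s => (hpos s).le) hint,
    eq_univ_of_forall fun s => Function.mem_support.mpr (hpos s).ne', univ_inter, volume_Iic]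
  exact ENNReal.zero_lt_top

theorem stmt5 (Λ : ℝ → ℝ)
    (hΛ : ∀ ζ : ℝ, Λ ζ = 3 * ∫ s in Set.Iic ζ, Real.exp (s^3 - ζ^3)) :
    (∀ ζ : ℝ, MeasureTheory.IntegrableOn (fun s : ℝ => Real.exp (s^3 - ζ^3)) (Set.Iic ζ)) ∧
    (∀ ζ : ℝ, 0 < Λ ζ) ∧
    (∀ ζ : ℝ, HasDerivAt Λ (3 - 3*ζ^2 * Λ ζ) ζ) := by
  have hsplit (s ζ : ℝ) : exp (s ^ 3 - ζ ^ 3) = exp (s ^ 3) * exp (-ζ ^ 3) := by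
    rw [← exp_add, sub_eq_add_neg]
  have hint (ζ : ℝ) : IntegrableOn (fun s => exp (s ^ 3 - ζ ^ 3)) (Iic ζ) := by
    simp_rw [hsplit]
    exact (integrableOn_exp_pow_three_Iic ζ).mul_const _
  have hΛ' : Λ = fun ζ => 3 * exp (-ζ ^ 3) * ∫ s in Iic ζ, exp (s ^ 3) := by
    funext ζ
    simp only [hΛ, hsplit, integral_mul_const]
    ring
  refine ⟨hint, fun ζ => ?_, fun ζ => ?_⟩
  · rw [hΛ]
    exact mul_pos three_pos (setIntegral_Iic_pos (fun _ => exp_pos _) (hint ζ))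
  · have hfactor : HasDerivAt (fun u : ℝ => 3 * exp (-u ^ 3)) (3 * (exp (-ζ ^ 3) * -(3 * ζ ^ 2))) ζ :=
      (((hasDerivAt_pow 3 ζ).fun_neg.exp).const_mul 3).congr_deriv (by push_cast; ring)
    have hF := hasDerivAt_setIntegral_Iic (by fun_prop) integrableOn_exp_pow_three_Iic ζ
    rw [hΛ']
    refine (hfactor.mul hF).congr_deriv ?_
    have hcancel : exp (-ζ ^ 3) * exp (ζ ^ 3) = 1 := by rw [← exp_add, neg_add_cancel, exp_zero]
    linear_combination 3 * hcancel
end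

section
/- Let Λ(ζ) = 3·∫_{-∞}^{ζ} exp(s³ − ζ³) ds. Then the symmetric improper integral lim_{M→∞} ∫_{-M}^{M} ζ·Λ(ζ) dζ exists and equals π/√3. -/
/-!
Substituting `s = ζ - u` and completing the square,
`Λ ζ = 3 ∫_0^∞ exp (-3u (ζ - u/2)^2 - u^3/4) du`. For fixed `u > 0` the `ζ`-integral of `ζ` times
this kernel is the first moment of a Gaussian centred at `u/2`, namely `√(π/3)/2 · √u · e^{-u^3/4}`,
and the remaining `u`-integral is the Gamma integral `∫_0^∞ √u e^{-u^3/4} du = 2√π/3`.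
Since `ζ Λ ζ` is only conditionally integrable, the integrals are exchanged for the combination
`ζ Λ ζ - ζ Λ (-ζ)` on `ζ > 0`, whose kernel is nonnegative.
-/

open MeasureTheory Real Set Filter Topology

section Improper

variable {E : Type*} [NormedAddCommGroup E] [NormedSpace ℝ E]

theorem setIntegral_Iic_eq_setIntegral_Ioi_sub (f : ℝ → E) (c : ℝ) :
    ∫ s in Iic c, f s = ∫ u in Ioi 0, f (c - u) := by
  rw [← integral_Ici_eq_integral_Ioi,
    ← (Measure.measurePreserving_sub_left volume c).setIntegral_preimage_emb
      (Homeomorph.subLeft c).measurableEmbedding]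
  congr 2
  ext u
  simp

theorem integral_Ioi_add_comp_neg {f : ℝ → E} (hf : Integrable f) :
    ∫ x in Ioi 0, (f x + f (-x)) = ∫ x, f x := by
  rw [integral_add hf.integrableOn hf.comp_neg.integrableOn, integral_comp_neg_Ioi, neg_zero,
    add_comm, intervalIntegral.integral_Iic_add_Ioi hf.integrableOn hf.integrableOn]

theorem intervalIntegral_neg_tendsto_integral_Ioi_add_comp_neg {g : ℝ → E}
    (hg : Continuous g) (h : IntegrableOn (fun x => g x + g (-x)) (Ioi 0)) :
    Tendsto (fun M => ∫ x in -M..M, g x) atTop (𝓝 (∫ x in Ioi 0, (g x + g (-x)))) := by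
  refine (intervalIntegral_tendsto_integral_Ioi 0 h tendsto_id).congr fun M => ?_
  have hgi : ∀ a b, IntervalIntegrable g volume a b := hg.intervalIntegrable
  have hgi_neg : IntervalIntegrable (fun x => g (-x)) volume 0 M :=
    (hg.comp continuous_neg).intervalIntegrable 0 M
  rw [id, intervalIntegral.integral_add (hgi 0 M) hgi_neg,
    intervalIntegral.integral_comp_neg, neg_zero, add_comm,
    intervalIntegral.integral_add_adjacent_intervals (hgi _ _) (hgi _ _)]

end Improper

section Gaussian

variable {b : ℝ}

theorem integrable_mul_exp_neg_mul_sq_sub (hb : 0 < b) (c : ℝ) :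
    Integrable fun x => x * exp (-b * (x - c) ^ 2) := by
  have h := ((integrable_mul_exp_neg_mul_sq hb).add
    ((integrable_exp_neg_mul_sq hb).const_mul c)).comp_sub_right c
  refine h.congr (Eventually.of_forall fun x => ?_)
  simp only [Pi.add_apply]
  ring

theorem integral_mul_exp_neg_mul_sq_sub (hb : 0 < b) (c : ℝ) :
    ∫ x, x * exp (-b * (x - c) ^ 2) = c * √(π / b) := by
  have hodd : ∫ x, x * exp (-b * x ^ 2) = 0 := by
    have h := integral_neg_eq_self (fun x => x * exp (-b * x ^ 2)) volume
    simp only [neg_sq, neg_mul, integral_neg] at h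
    simp only [neg_mul]
    linarith
  calc ∫ x, x * exp (-b * (x - c) ^ 2)
      = ∫ x, (x - c + c) * exp (-b * (x - c) ^ 2) := by simp only [sub_add_cancel]
    _ = ∫ x, (x + c) * exp (-b * x ^ 2) :=
        integral_sub_right_eq_self (fun x => (x + c) * exp (-b * x ^ 2)) c
    _ = (∫ x, x * exp (-b * x ^ 2)) + ∫ x, c * exp (-b * x ^ 2) := by
        simp only [add_mul]
        exact integral_add (integrable_mul_exp_neg_mul_sq hb)
          ((integrable_exp_neg_mul_sq hb).const_mul c)
    _ = c * √(π / b) := by rw [hodd, integral_const_mul, integral_gaussian, zero_add]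

end Gaussian

theorem integrableOn_rpow_mul_exp_neg_cube_div_four {s : ℝ} (hs : -1 < s) :
    IntegrableOn (fun u : ℝ => u ^ s * exp (-u ^ 3 / 4)) (Ioi 0) := by
  convert integrableOn_rpow_mul_exp_neg_mul_rpow hs (by norm_num : (0 : ℝ) < 3)
    (by norm_num : (0 : ℝ) < 1 / 4) using 4 with u
  rw [rpow_ofNat]
  ring

theorem integrableOn_exp_neg_cube_div_four :
    IntegrableOn (fun u : ℝ => exp (-u ^ 3 / 4)) (Ioi 0) := by
  simpa using integrableOn_rpow_mul_exp_neg_cube_div_four (s := 0) (by norm_num)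

theorem integrableOn_sqrt_mul_exp_neg_cube_div_four :
    IntegrableOn (fun u : ℝ => √u * exp (-u ^ 3 / 4)) (Ioi 0) := by
  simpa only [sqrt_eq_rpow] using
    integrableOn_rpow_mul_exp_neg_cube_div_four (s := 1 / 2) (by norm_num)

theorem integral_sqrt_mul_exp_neg_cube_div_four :
    ∫ u in Ioi 0, √u * exp (-u ^ 3 / 4) = 2 * √π / 3 := by
  have h := integral_rpow_mul_exp_neg_mul_rpow (by norm_num : (0 : ℝ) < 3)
    (by norm_num : (-1 : ℝ) < 1 / 2) (by norm_num : (0 : ℝ) < 1 / 4)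
  have hquarter : (1 / 4 : ℝ) ^ (-(1 / 2 + 1) / 3 : ℝ) = 2 := by
    rw [show (-(1 / 2 + 1) / 3 : ℝ) = -(1 / 2) by norm_num, rpow_neg (by norm_num),
      ← sqrt_eq_rpow, show (1 / 4 : ℝ) = (1 / 2) ^ 2 by norm_num, sqrt_sq (by norm_num)]
    norm_num
  rw [hquarter, show ((1 / 2 + 1) / 3 : ℝ) = 1 / 2 by norm_num, Gamma_one_half_eq] at h
  convert h using 1
  · congr 1 with u
    rw [sqrt_eq_rpow, rpow_ofNat]
    ring_nf
  · ring

noncomputable def cubeKernel (u ζ : ℝ) : ℝ := exp ((ζ - u) ^ 3 - ζ ^ 3)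

theorem cubeKernel_eq (u ζ : ℝ) :
    cubeKernel u ζ = exp (-(3 * u) * (ζ - u / 2) ^ 2) * exp (-u ^ 3 / 4) := by
  rw [cubeKernel, ← exp_add]
  ring_nf

theorem cubeKernel_pos (u ζ : ℝ) : 0 < cubeKernel u ζ := exp_pos _

theorem norm_cubeKernel_le {u : ℝ} (hu : 0 ≤ u) (ζ : ℝ) :
    ‖cubeKernel u ζ‖ ≤ exp (-u ^ 3 / 4) := by
  rw [norm_of_nonneg (cubeKernel_pos u ζ).le, cubeKernel_eq]
  refine mul_le_of_le_one_left (exp_pos _).le (exp_le_one_iff.mpr ?_)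
  nlinarith [sq_nonneg (ζ - u / 2)]

theorem integrableOn_cubeKernel (ζ : ℝ) : IntegrableOn (fun u => cubeKernel u ζ) (Ioi 0) := by
  refine integrableOn_exp_neg_cube_div_four.mono' (by unfold cubeKernel; fun_prop) ?_
  filter_upwards [ae_restrict_mem measurableSet_Ioi] with u hu
  exact norm_cubeKernel_le hu.le ζ

theorem continuous_integral_cubeKernel : Continuous fun ζ => ∫ u in Ioi 0, cubeKernel u ζ := by
  refine continuous_of_dominated (fun ζ => (integrableOn_cubeKernel ζ).aestronglyMeasurable)
    (fun ζ => ?_) integrableOn_exp_neg_cube_div_four (Eventually.of_forall fun u => ?_)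
  · filter_upwards [ae_restrict_mem measurableSet_Ioi] with u hu
    exact norm_cubeKernel_le hu.le ζ
  · unfold cubeKernel; fun_prop

theorem integrable_mul_cubeKernel {u : ℝ} (hu : 0 < u) :
    Integrable fun ζ => ζ * cubeKernel u ζ := by
  simp only [cubeKernel_eq, ← mul_assoc]
  exact (integrable_mul_exp_neg_mul_sq_sub (by positivity) _).mul_const _

theorem integral_mul_cubeKernel {u : ℝ} (hu : 0 < u) :
    ∫ ζ, ζ * cubeKernel u ζ = √(π / 3) / 2 * (√u * exp (-u ^ 3 / 4)) := by
  simp only [cubeKernel_eq, ← mul_assoc]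
  rw [integral_mul_const, integral_mul_exp_neg_mul_sq_sub (by positivity),
    show π / (3 * u) = π / 3 / u by ring, sqrt_div' _ hu.le]
  field_simp
  rw [sq_sqrt hu.le]

noncomputable def symmKernel (u ζ : ℝ) : ℝ := ζ * cubeKernel u ζ + -ζ * cubeKernel u (-ζ)

theorem symmKernel_nonneg (u : ℝ) {ζ : ℝ} (hζ : 0 ≤ ζ) : 0 ≤ symmKernel u ζ := by
  have h : cubeKernel u (-ζ) ≤ cubeKernel u ζ :=
    exp_le_exp.mpr (by nlinarith [mul_nonneg hζ (sq_nonneg u)])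
  rw [symmKernel, neg_mul, ← sub_eq_add_neg, ← mul_sub]
  exact mul_nonneg hζ (sub_nonneg.mpr h)

theorem integral_Ioi_symmKernel {u : ℝ} (hu : 0 < u) :
    ∫ ζ in Ioi 0, symmKernel u ζ = √(π / 3) / 2 * (√u * exp (-u ^ 3 / 4)) := by
  rw [← integral_mul_cubeKernel hu]
  exact integral_Ioi_add_comp_neg (integrable_mul_cubeKernel hu)

theorem integrable_symmKernel :
    Integrable (Function.uncurry symmKernel)
      ((volume.restrict (Ioi 0)).prod (volume.restrict (Ioi 0))) := by
  have hcont : Continuous (Function.uncurry symmKernel) := by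
    unfold Function.uncurry symmKernel cubeKernel
    fun_prop
  refine (integrable_prod_iff hcont.aestronglyMeasurable).mpr ⟨?_, ?_⟩
  · filter_upwards [ae_restrict_mem measurableSet_Ioi] with u hu
    exact ((integrable_mul_cubeKernel hu).add (integrable_mul_cubeKernel hu).comp_neg).restrict
  · refine IntegrableOn.congr_fun (integrableOn_sqrt_mul_exp_neg_cube_div_four.const_mul
      (√(π / 3) / 2)) (fun u hu => ?_) measurableSet_Ioi
    rw [← integral_Ioi_symmKernel hu]
    refine setIntegral_congr_fun measurableSet_Ioi fun ζ hζ => ?_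
    exact (norm_of_nonneg (symmKernel_nonneg u (le_of_lt hζ))).symm

noncomputable def lambdaProfile (ζ : ℝ) : ℝ := 3 * ∫ u in Ioi 0, cubeKernel u ζ

theorem lambdaProfile_eq (ζ : ℝ) :
    lambdaProfile ζ = 3 * ∫ s in Iic ζ, exp (s ^ 3 - ζ ^ 3) := by
  rw [lambdaProfile, setIntegral_Iic_eq_setIntegral_Ioi_sub]
  rfl

theorem continuous_lambdaProfile : Continuous lambdaProfile :=
  continuous_const.mul continuous_integral_cubeKernel

theorem mul_lambdaProfile_add_neg (ζ : ℝ) :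
    ζ * lambdaProfile ζ + -ζ * lambdaProfile (-ζ) = 3 * ∫ u in Ioi 0, symmKernel u ζ := by
  simp only [lambdaProfile, symmKernel]
  rw [integral_add ((integrableOn_cubeKernel ζ).const_mul ζ)
    ((integrableOn_cubeKernel (-ζ)).const_mul (-ζ)), integral_const_mul, integral_const_mul]
  ring

theorem integrableOn_mul_lambdaProfile_add_neg :
    IntegrableOn (fun ζ => ζ * lambdaProfile ζ + -ζ * lambdaProfile (-ζ)) (Ioi 0) := by
  simp only [mul_lambdaProfile_add_neg]
  exact integrable_symmKernel.integral_prod_right.const_mul 3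

theorem integral_mul_lambdaProfile_add_neg :
    ∫ ζ in Ioi 0, (ζ * lambdaProfile ζ + -ζ * lambdaProfile (-ζ)) = π / √3 := by
  simp only [mul_lambdaProfile_add_neg]
  rw [integral_const_mul, ← integral_integral_swap integrable_symmKernel,
    setIntegral_congr_fun measurableSet_Ioi fun u hu => integral_Ioi_symmKernel hu,
    integral_const_mul, integral_sqrt_mul_exp_neg_cube_div_four,
    sqrt_div' _ (by norm_num : (0 : ℝ) ≤ 3)]
  field_simp
  rw [sq_sqrt pi_pos.le]

theorem stmt6 (Λ : ℝ → ℝ)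
    (hΛ : ∀ ζ : ℝ, Λ ζ = 3 * ∫ s in Set.Iic ζ, Real.exp (s^3 - ζ^3)) :
    Filter.Tendsto (fun M : ℝ => ∫ ζ in (-M)..M, ζ * Λ ζ) Filter.atTop
      (nhds (Real.pi / Real.sqrt 3)) := by
  obtain rfl : Λ = lambdaProfile := funext fun ζ => by rw [hΛ, lambdaProfile_eq]
  rw [← integral_mul_lambdaProfile_add_neg]
  exact intervalIntegral_neg_tendsto_integral_Ioi_add_comp_neg
    (continuous_id.mul continuous_lambdaProfile) integrableOn_mul_lambdaProfile_add_neg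
end

section
/- Let λ : (0, ∞) → (0, ∞) be continuous and suppose liminf_{R→0⁺} log(λ(R))/log(R) = ζ with 0 < ζ < ∞. Then for every K > 1 there exist sequences R_n → 0⁺ and μ_n → ∞ such that for every n and every R with R_n/μ_n ≤ R ≤ μ_n·R_n, one has λ(R)/λ(R_n) ≤ K·(R/R_n)^ζ. -/
/-!
Put `x = log R` and `H x = log λ(eˣ) - ζ x`, a continuous function on `ℝ`. The liminf hypothesis
says that for every `ε > 0`, `H x ≤ ε |x|` for all sufficiently negative `x`, while
`H x ≥ -ε |x|` for arbitrarily negative `x`. Maximising the penalised function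
`H x - ε |x - t₀|` over a compact interval around such a point `t₀` produces a point `t` with
`H s ≤ H t + ε |s - t|` on the whole interval, and the two growth bounds force `t`, together with a
window of prescribed width `m` around it, to stay inside the interval. With `ε m = log K` this is
the desired inequality in logarithmic coordinates, and `Rₙ = e^{tₙ}`, `μₙ = e^{n+1}`.
-/

open Filter Real Set

lemma eventually_lt_and_frequently_lt_of_liminf_eq {α : Type*} {F : Filter α} {u : α → ℝ}
    {ζ ε : ℝ} (hlim : liminf u F = ζ) (hζ : ζ ≠ 0) (hε : 0 < ε) :
    (∀ᶠ x in F, ζ - ε < u x) ∧ ∃ᶠ x in F, u x < ζ + ε := by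
  have hbdd : F.IsBoundedUnder (· ≥ ·) u := by
    by_contra h
    exact hζ (hlim ▸ Real.liminf_of_not_isBoundedUnder h)
  have hcobdd : F.IsCoboundedUnder (· ≥ ·) u := by
    by_contra h
    exact hζ (hlim ▸ Real.liminf_of_not_isCoboundedUnder h)
  exact ⟨eventually_lt_of_lt_liminf (by linarith) hbdd,
    frequently_lt_of_liminf_lt hcobdd (by linarith)⟩

lemma eventually_sub_mul_le_and_frequently_le_of_liminf_div_eq {g : ℝ → ℝ} {ζ ε : ℝ}
    (hlim : liminf (fun x => g x / x) atBot = ζ) (hζ : ζ ≠ 0) (hε : 0 < ε) :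
    (∀ᶠ x in atBot, g x - ζ * x ≤ ε * |x|) ∧ ∃ᶠ x in atBot, -(ε * |x|) ≤ g x - ζ * x := by
  obtain ⟨hev, hfreq⟩ := eventually_lt_and_frequently_lt_of_liminf_eq hlim hζ hε
  constructor
  · filter_upwards [hev, eventually_lt_atBot 0] with x hx hx0
    rw [lt_div_iff_of_neg hx0] at hx
    rw [abs_of_neg hx0]
    linarith
  · refine (hfreq.and_eventually (eventually_lt_atBot 0)).mono fun x ⟨hx, hx0⟩ => ?_
    rw [div_lt_iff_of_neg hx0] at hx
    rw [abs_of_neg hx0]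
    linarith

lemma le_add_mul_abs_sub_of_isMaxOn {H : ℝ → ℝ} {I : Set ℝ} {ε c t s : ℝ} (hε : 0 ≤ ε)
    (hmax : IsMaxOn (fun x => H x - ε * |x - c|) I t) (hs : s ∈ I) :
    H s ≤ H t + ε * |s - t| := by
  have hst : H s - ε * |s - c| ≤ H t - ε * |t - c| := hmax hs
  have htri : |s - c| ≤ |s - t| + |t - c| := abs_sub_le s t c
  nlinarith

theorem exists_forall_abs_sub_le_imp_le_add {H : ℝ → ℝ} (hH : Continuous H)
    (hup : ∀ ε > 0, ∀ᶠ x in atBot, H x ≤ ε * |x|)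
    (hlow : ∀ ε > 0, ∃ᶠ x in atBot, -(ε * |x|) ≤ H x)
    {δ m : ℝ} (hδ : 0 < δ) (hm : 0 < m) (N : ℝ) :
    ∃ t ≤ N, ∀ s, |s - t| ≤ m → H s ≤ H t + δ := by
  set ε := δ / m
  have hε : 0 < ε := div_pos hδ hm
  obtain ⟨A, hA⟩ := eventually_atBot.mp (hup (ε / 2) (by positivity))
  set b := min A 0
  obtain ⟨t₀, hHt₀, ht₀⟩ :=
    ((hlow (ε / 4) (by positivity)).and_eventually
      (eventually_le_atBot (min (2 * (b - m)) (2 * N)))).exists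
  have hb : b ≤ 0 := min_le_right _ _
  have ht₀b : t₀ ≤ 2 * (b - m) := ht₀.trans (min_le_left _ _)
  have ht₀N : t₀ ≤ 2 * N := ht₀.trans (min_le_right _ _)
  have ht₀I : t₀ ∈ Icc (3 * t₀) b := ⟨by linarith, by linarith⟩
  obtain ⟨t, ⟨ht_lo, ht_hi⟩, hmax⟩ :=
    isCompact_Icc.exists_isMaxOn (f := fun x => H x - ε * |x - t₀|) ⟨t₀, ht₀I⟩ <|
      (hH.sub (continuous_const.mul (continuous_id.sub continuous_const).abs)).continuousOn
  -- comparing the maximum with the value at `t₀` confines `t` to `[5 t₀ / 2, t₀ / 2]`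
  have hloc : |t - t₀| ≤ -t / 2 - t₀ / 4 := by
    have hcmp : H t₀ ≤ H t - ε * |t - t₀| := by simpa using hmax ht₀I
    have hHt : H t ≤ ε / 2 * |t| := hA t (ht_hi.trans (min_le_left _ _))
    rw [abs_of_nonpos (by linarith : t ≤ 0)] at hHt
    rw [abs_of_neg (by linarith : t₀ < 0)] at hHt₀
    refine le_of_mul_le_mul_left ?_ hε
    linarith
  obtain ⟨hloc₁, hloc₂⟩ := abs_sub_le_iff.mp hloc
  refine ⟨t, by linarith, fun s hs => ?_⟩
  obtain ⟨hs₁, hs₂⟩ := abs_sub_le_iff.mp hs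
  have hsI : s ∈ Icc (3 * t₀) b := ⟨by linarith, by linarith⟩
  calc H s ≤ H t + ε * |s - t| := le_add_mul_abs_sub_of_isMaxOn hε.le hmax hsI
    _ ≤ H t + ε * m := by gcongr
    _ = H t + δ := by rw [div_mul_cancel₀ δ hm.ne']

lemma abs_log_sub_log_le_log {R μ ρ : ℝ} (hR : 0 < R) (hμ : 0 < μ) (h₁ : R / μ ≤ ρ)
    (h₂ : ρ ≤ μ * R) : |log ρ - log R| ≤ log μ := by
  have hρ : 0 < ρ := (div_pos hR hμ).trans_le h₁
  have hlo := log_le_log (div_pos hR hμ) h₁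
  have hhi := log_le_log hρ h₂
  rw [log_div hR.ne' hμ.ne'] at hlo
  rw [log_mul hμ.ne' hR.ne'] at hhi
  exact abs_sub_le_iff.mpr ⟨by linarith, by linarith⟩

lemma div_le_mul_rpow_of_log_sub_log_le {a b K r ζ : ℝ} (ha : 0 < a) (hb : 0 < b) (hK : 0 < K)
    (hr : 0 < r) (h : log a - log b ≤ log K + ζ * log r) : a / b ≤ K * r ^ ζ := by
  rw [← exp_log (div_pos ha hb), ← exp_log (mul_pos hK (rpow_pos_of_pos hr ζ)),
    log_div ha.ne' hb.ne', log_mul hK.ne' (rpow_pos_of_pos hr ζ).ne', log_rpow hr]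
  exact exp_le_exp.mpr h

theorem stmt12 (l : ℝ → ℝ) (hcont : ContinuousOn l (Set.Ioi 0))
    (hpos : ∀ R ∈ Set.Ioi (0:ℝ), 0 < l R) (ζ : ℝ) (hζ : 0 < ζ)
    (hlim : Filter.liminf (fun R => Real.log (l R) / Real.log R)
      (nhdsWithin 0 (Set.Ioi 0)) = ζ)
    (K : ℝ) (hK : 1 < K) :
    ∃ R μ : ℕ → ℝ, (∀ n, 0 < R n) ∧
      Filter.Tendsto R Filter.atTop (nhds 0) ∧
      Filter.Tendsto μ Filter.atTop Filter.atTop ∧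
      ∀ n : ℕ, ∀ ρ : ℝ, R n / μ n ≤ ρ → ρ ≤ μ n * R n →
        l ρ / l (R n) ≤ K * (ρ / R n) ^ ζ := by
  set g : ℝ → ℝ := fun x => log (l (exp x))
  have hg : Continuous g := continuousOn_univ.mp <|
    (hcont.comp continuous_exp.continuousOn fun x _ => exp_pos x).log
      fun x _ => (hpos _ (exp_pos x)).ne'
  have hlim' : liminf (fun x => g x / x) atBot = ζ := by
    rw [← hlim, ← map_exp_atBot, ← liminf_comp]
    simp only [Function.comp_def, log_exp, g]
  have hbounds ε (hε : 0 < ε) :=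
    eventually_sub_mul_le_and_frequently_le_of_liminf_div_eq hlim' hζ.ne' hε
  have hwindow (n : ℕ) := exists_forall_abs_sub_le_imp_le_add (H := fun x => g x - ζ * x)
    (hg.sub (continuous_const.mul continuous_id)) (fun ε hε => (hbounds ε hε).1)
    (fun ε hε => (hbounds ε hε).2) (log_pos hK) n.cast_add_one_pos (-n)
  choose t ht hmax using hwindow
  refine ⟨fun n => exp (t n), fun n => exp (n + 1), fun n => exp_pos _, ?_, ?_, ?_⟩
  · exact tendsto_exp_atBot.comp <| tendsto_atBot_mono ht <|
      tendsto_neg_atBot_iff.mpr tendsto_natCast_atTop_atTop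
  · exact tendsto_exp_atTop.comp <| tendsto_atTop_add_const_right _ 1 tendsto_natCast_atTop_atTop
  · intro n ρ h₁ h₂
    have hρ : 0 < ρ := (div_pos (exp_pos _) (exp_pos _)).trans_le h₁
    have hs := abs_log_sub_log_le_log (exp_pos _) (exp_pos _) h₁ h₂
    rw [log_exp, log_exp] at hs
    have hH := hmax n (log ρ) hs
    simp only [g, exp_log hρ] at hH
    refine div_le_mul_rpow_of_log_sub_log_le (hpos _ hρ) (hpos _ (exp_pos _)) (by linarith)
      (div_pos hρ (exp_pos _)) ?_
    rw [log_div hρ.ne' (exp_pos _).ne', log_exp]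
    linarith
end

section
/- Let γ > 0 and let H : [0, ∞) → ℝ be twice continuously differentiable with H''(ξ) = (γ/3)·ξ·H(ξ) − (ξ²/3)·H'(ξ) for all ξ ≥ 0, H(0) = 0 and H'(0) = 1. Then H'(ξ) > 0 for all ξ ≥ 0; in particular H(ξ) > 0 for all ξ > 0. -/
/-!
If `H'` had a first non-positive point `a > 0`, then `H' > 0` on `[0, a)` would make `H a > 0`,
so `H'' a = (γ/3) a H a - (a²/3) H' a > 0`; but a function with positive derivative at `a` is
smaller than its value at `a` just to the left of `a`, which contradicts `H' > 0 ≥ H' a` there.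
-/

open Set Filter Topology

lemma HasDerivAt.eventually_lt_left {g : ℝ → ℝ} {g' a : ℝ} (hg : HasDerivAt g g' a)
    (hg' : 0 < g') : ∀ᶠ x in 𝓝[<] a, g x < g a := by
  have hslope : Tendsto (slope g a) (𝓝[<] a) (𝓝 g') :=
    (hasDerivAt_iff_tendsto_slope_left_right.1 hg).1
  filter_upwards [hslope.eventually (eventually_gt_nhds hg'), self_mem_nhdsWithin]
    with x hx hxa
  exact (slope_pos_iff_gt hxa).1 hx

lemma lt_of_forall_hasDerivAt_pos {f f' : ℝ → ℝ} {a b : ℝ} (hab : a < b)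
    (hf : ∀ x ∈ Icc a b, HasDerivAt f (f' x) x) (hf' : ∀ x ∈ Ioo a b, 0 < f' x) :
    f a < f b := by
  have hmono : StrictMonoOn f (Icc a b) := by
    refine strictMonoOn_of_hasDerivWithinAt_pos (f' := f') (convex_Icc a b)
      (fun x hx => (hf x hx).continuousAt.continuousWithinAt) (fun x hx => ?_) ?_
    · exact (hf x (interior_subset hx)).hasDerivWithinAt
    · simpa only [interior_Icc] using hf'
  exact hmono (left_mem_Icc.2 hab.le) (right_mem_Icc.2 hab.le) hab

theorem forall_pos_of_deriv_pos_at_first_nonpos {g g' : ℝ → ℝ} {b : ℝ}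
    (hg : ∀ x, b ≤ x → HasDerivAt g (g' x) x) (hb : 0 < g b)
    (hfirst : ∀ a, b < a → g a ≤ 0 → (∀ x ∈ Ico b a, 0 < g x) → 0 < g' a) :
    ∀ x, b ≤ x → 0 < g x := by
  by_contra! hneg
  obtain ⟨c, hbc, hgc⟩ := hneg
  set s : Set ℝ := Ici b ∩ g ⁻¹' Iic 0
  have hs_bdd : BddBelow s := ⟨b, fun x hx => hx.1⟩
  have hs_closed : IsClosed s :=
    ContinuousOn.preimage_isClosed_of_isClosed
      (fun x hx => (hg x hx).continuousAt.continuousWithinAt) isClosed_Ici isClosed_Iic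
  set a := sInf s
  obtain ⟨hba, hga⟩ : a ∈ s := hs_closed.csInf_mem ⟨c, hbc, hgc⟩ hs_bdd
  have hbelow : ∀ x ∈ Ico b a, 0 < g x := fun x hx =>
    lt_of_not_ge fun hgx => (csInf_le hs_bdd ⟨hx.1, hgx⟩).not_gt hx.2
  have hba' : b < a := hba.lt_of_ne fun hab => (hab ▸ hb).not_ge hga
  obtain ⟨x, hx_lt, hx_mem⟩ :=
    (((hg a hba).eventually_lt_left (hfirst a hba' hga hbelow)).and
      (Ioo_mem_nhdsLT hba')).exists
  exact (hbelow x ⟨hx_mem.1.le, hx_mem.2⟩).not_ge (hx_lt.le.trans hga)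

theorem stmt17_general (γ : ℝ) (hγ : 0 < γ) (H H' : ℝ → ℝ)
    (hH : ∀ ξ : ℝ, 0 ≤ ξ → HasDerivAt H (H' ξ) ξ)
    (hH' : ∀ ξ : ℝ, 0 ≤ ξ → HasDerivAt H' ((γ/3)*ξ*H ξ - (ξ^2/3)*H' ξ) ξ)
    (h0 : H 0 = 0) (h1 : H' 0 = 1) :
    (∀ ξ : ℝ, 0 ≤ ξ → 0 < H' ξ) ∧ (∀ ξ : ℝ, 0 < ξ → 0 < H ξ) := by
  have hH_pos : ∀ ξ, 0 < ξ → (∀ x ∈ Ioo 0 ξ, 0 < H' x) → 0 < H ξ := fun ξ hξ hpos =>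
    h0 ▸ lt_of_forall_hasDerivAt_pos hξ (fun x hx => hH x hx.1) hpos
  have hH'_pos : ∀ ξ, 0 ≤ ξ → 0 < H' ξ := by
    refine forall_pos_of_deriv_pos_at_first_nonpos hH' (h1 ▸ one_pos) ?_
    intro a ha hH'a hbelow
    have hHa : 0 < H a := hH_pos a ha fun x hx => hbelow x (Ioo_subset_Ico_self hx)
    have : 0 < γ / 3 * a * H a := by positivity
    nlinarith [sq_nonneg a]
  exact ⟨hH'_pos, fun ξ hξ => hH_pos ξ hξ fun x hx => hH'_pos x hx.1.le⟩

theorem stmt17 (γ : ℝ) (hγ : 0 < γ) (H H' : ℝ → ℝ)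
    (hH : ∀ ξ : ℝ, 0 ≤ ξ → HasDerivAt H (H' ξ) ξ)
    (hH' : ∀ ξ : ℝ, 0 ≤ ξ → HasDerivAt H' ((γ/3)*ξ*H ξ - (ξ^2/3)*H' ξ) ξ)
    (hH'cont : ContinuousOn H' (Set.Ici 0))
    (h0 : H 0 = 0) (h1 : H' 0 = 1) :
    (∀ ξ : ℝ, 0 ≤ ξ → 0 < H' ξ) ∧ (∀ ξ : ℝ, 0 < ξ → 0 < H ξ) :=
  stmt17_general γ hγ H H' hH hH' h0 h1
end
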